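/- arXiv:2412.20278 — 4 statements merged into one kernel-verified Lean document; each statement's English description precedes it below -/
import Mathlib

section
/- Properties of the auxiliary function 𝔏 (equations (3.14)–(3.18)). Define 𝔏(t) := [∫₀ᵗ p₁(s) G(G(ξ−β+β₀) ∫₀ˢ p₁(τ) dτ + β₀) ds] / [(ξ−β) ∫₀ᵗ p₂(s) ds] for t > 0. Then: 𝔏 is continuous and positive on (0,∞); 𝔏(t) < 1 for all t > 0; lim_{t→+∞} 𝔏(t) exists and lies in (0,1); lim_{t→0+} 𝔏(t) = (G(β₀)/(ξ−β)) · lim_{t→0+} p₁(t)/p₂(t) and lies in (0,1); consequently there exists σ₁ ∈ (0,1) with 𝔏(t) ≥ σ₁ for all t > 0. -/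
open MeasureTheory Set Filter

set_option maxHeartbeats 1000000

/-- **Properties of the auxiliary function `𝔏` (equations (3.14)–(3.18)).**
With `L t = (∫₀ᵗ p₁(s) G(G(ξ-β+β₀) ∫₀ˢ p₁ + β₀) ds) / ((ξ-β) ∫₀ᵗ p₂)`:
`L` is continuous and takes values in `(0,1)` on `(0,∞)`, has a limit in
`(0,1)` at `+∞`, tends to `(G β₀/(ξ-β)) · lim_{t→0+} p₁/p₂ ∈ (0,1)` at `0+`,
and consequently is bounded below by some `σ₁ ∈ (0,1)`. -/
theorem auxiliary_function_L_properties
    (p₁ p₂ : ℝ → ℝ) (G : ℝ → ℝ) (β β₀ ξ ratLim : ℝ)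
    (hp₁_cont : ContinuousOn p₁ (Ioi 0)) (hp₂_cont : ContinuousOn p₂ (Ioi 0))
    (hp₁_pos : ∀ t ∈ Ioi (0:ℝ), 0 < p₁ t) (hp₂_pos : ∀ t ∈ Ioi (0:ℝ), 0 < p₂ t)
    (hp_le : ∀ t ∈ Ioi (0:ℝ), p₁ t ≤ p₂ t)
    (hp_ne : ∃ t ∈ Ioi (0:ℝ), p₁ t ≠ p₂ t)
    (hp₂_int : (∫ t in Ioi (0:ℝ), p₂ t) = 1)
    (hrat_pos : 0 < ratLim)
    (hrat_lim : Tendsto (fun t => p₁ t / p₂ t) (nhdsWithin 0 (Ioi 0)) (nhds ratLim))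
    (hG_cont : ContinuousOn G (Ici 0))
    (hG_zero : G 0 = 0)
    (hG_nonneg : ∀ u, 0 ≤ u → 0 ≤ G u)
    (hG_mono : StrictMonoOn G (Ici 0))
    (hG_conc : ConcaveOn ℝ (Ici 0) G)
    (hβ₀_pos : 0 < β₀) (hβ₀_le : β₀ ≤ β)
    (hξ_pos : 0 < ξ) (hξ_eq : ξ - G ξ = β)
    (L : ℝ → ℝ)
    (hL : ∀ t, L t =
      (∫ s in Ioc (0:ℝ) t,
        p₁ s * G (G (ξ - β + β₀) * (∫ τ in Ioc (0:ℝ) s, p₁ τ) + β₀)) /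
      ((ξ - β) * ∫ s in Ioc (0:ℝ) t, p₂ s)) :
    ContinuousOn L (Ioi 0) ∧
    (∀ t ∈ Ioi (0:ℝ), 0 < L t ∧ L t < 1) ∧
    (∃ A ∈ Ioo (0:ℝ) 1, Tendsto L atTop (nhds A)) ∧
    (Tendsto L (nhdsWithin 0 (Ioi 0)) (nhds (G β₀ / (ξ - β) * ratLim)) ∧
      G β₀ / (ξ - β) * ratLim ∈ Ioo (0:ℝ) 1) ∧
    (∃ σ₁ ∈ Ioo (0:ℝ) 1, ∀ t ∈ Ioi (0:ℝ), σ₁ ≤ L t) := by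
  -- abbreviations
  obtain ⟨F₁, hF₁⟩ : ∃ F : ℝ → ℝ, ∀ u, F u = ∫ τ in Ioc (0:ℝ) u, p₁ τ := ⟨_, fun _ => rfl⟩
  obtain ⟨F₂, hF₂⟩ : ∃ F : ℝ → ℝ, ∀ u, F u = ∫ τ in Ioc (0:ℝ) u, p₂ τ := ⟨_, fun _ => rfl⟩
  obtain ⟨g, hg⟩ : ∃ g : ℝ → ℝ, ∀ s, g s = G (G (ξ - β + β₀) * F₁ s + β₀) := ⟨_, fun _ => rfl⟩
  obtain ⟨N, hN⟩ : ∃ N : ℝ → ℝ, ∀ t, N t = ∫ s in Ioc (0:ℝ) t, p₁ s * g s := ⟨_, fun _ => rfl⟩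
  have hL' : ∀ t, L t = N t / ((ξ - β) * F₂ t) := by
    intro t; simp only [hN, hg, hF₁, hF₂]; exact hL t
  have hGmono := hG_mono.monotoneOn
  have hGξ : G ξ = ξ - β := by linarith
  have hKpos : 0 < ξ - β := by
    have h := hG_mono (mem_Ici.mpr le_rfl) (mem_Ici.mpr hξ_pos.le) hξ_pos
    rw [hG_zero, hGξ] at h; exact h
  have hβ₀_lt_ξ : β₀ < ξ := by linarith
  -- basic integrability
  have hp₂_integ : IntegrableOn p₂ (Ioi 0) := by
    by_contra h
    rw [MeasureTheory.integral_undef h] at hp₂_int; norm_num at hp₂_int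
  have hp₁_integ : IntegrableOn p₁ (Ioi 0) := by
    refine MeasureTheory.Integrable.mono hp₂_integ (hp₁_cont.aestronglyMeasurable measurableSet_Ioi) ?_
    filter_upwards [ae_restrict_mem measurableSet_Ioi] with s hs
    rw [Real.norm_eq_abs, Real.norm_eq_abs, abs_of_pos (hp₁_pos s hs),
      abs_of_pos (hp₂_pos s hs)]
    exact hp_le s hs
  have hp₁_Ioc : ∀ t : ℝ, IntegrableOn p₁ (Ioc 0 t) :=
    fun t => hp₁_integ.mono_set Ioc_subset_Ioi_self
  have hp₂_Ioc : ∀ t : ℝ, IntegrableOn p₂ (Ioc 0 t) :=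
    fun t => hp₂_integ.mono_set Ioc_subset_Ioi_self
  -- nonnegativity and monotonicity of F₁, F₂
  have hF₁_nonneg : ∀ u, 0 ≤ F₁ u := by
    intro u; rw [hF₁]
    exact setIntegral_nonneg measurableSet_Ioc fun x hx => (hp₁_pos x hx.1).le
  have hF₂_nonneg : ∀ u, 0 ≤ F₂ u := by
    intro u; rw [hF₂]
    exact setIntegral_nonneg measurableSet_Ioc fun x hx => (hp₂_pos x hx.1).le
  have hp₁_ae : ∀ (S : Set ℝ), MeasurableSet S → S ⊆ Ioi 0 →
      0 ≤ᵐ[volume.restrict S] p₁ := by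
    intro S hS hsub
    filter_upwards [ae_restrict_mem hS] with s hs
    exact (hp₁_pos s (hsub hs)).le
  have hp₂_ae : ∀ (S : Set ℝ), MeasurableSet S → S ⊆ Ioi 0 →
      0 ≤ᵐ[volume.restrict S] p₂ := by
    intro S hS hsub
    filter_upwards [ae_restrict_mem hS] with s hs
    exact (hp₂_pos s (hsub hs)).le
  have hF₁_mono : Monotone F₁ := by
    intro a b hab
    rw [hF₁, hF₁]
    exact setIntegral_mono_set (hp₁_Ioc b)
      (hp₁_ae _ measurableSet_Ioc Ioc_subset_Ioi_self)
      ((Ioc_subset_Ioc_right hab).eventuallyLE)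
  have hF₁_le_r : ∀ u, F₁ u ≤ ∫ τ in Ioi (0:ℝ), p₁ τ := by
    intro u; rw [hF₁]
    exact setIntegral_mono_set hp₁_integ
      (hp₁_ae _ measurableSet_Ioi (fun _ h => h))
      (Ioc_subset_Ioi_self.eventuallyLE)
  have hF₂_le_one : ∀ u, F₂ u ≤ 1 := by
    intro u; rw [hF₂, ← hp₂_int]
    exact setIntegral_mono_set hp₂_integ
      (hp₂_ae _ measurableSet_Ioi (fun _ h => h))
      (Ioc_subset_Ioi_self.eventuallyLE)
  have hF₁_le_F₂ : ∀ u, F₁ u ≤ F₂ u := by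
    intro u; rw [hF₁, hF₂]
    exact setIntegral_mono_on (hp₁_Ioc u) (hp₂_Ioc u) measurableSet_Ioc
      (fun x hx => hp_le x hx.1)
  have hr_nonneg : 0 ≤ ∫ τ in Ioi (0:ℝ), p₁ τ :=
    setIntegral_nonneg measurableSet_Ioi fun x hx => (hp₁_pos x hx).le
  -- r < 1
  have hr_lt : (∫ τ in Ioi (0:ℝ), p₁ τ) < 1 := by
    obtain ⟨t₀, ht₀, hne⟩ := hp_ne
    have hd_cont : ContinuousAt (fun s => p₂ s - p₁ s) t₀ :=
      (hp₂_cont.sub hp₁_cont).continuousAt (isOpen_Ioi.mem_nhds ht₀)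
    have hd0 : 0 < p₂ t₀ - p₁ t₀ := sub_pos.mpr (lt_of_le_of_ne (hp_le t₀ ht₀) hne)
    have hev : ∀ᶠ s in nhds t₀, 0 < p₂ s - p₁ s := hd_cont.eventually (eventually_gt_nhds hd0)
    obtain ⟨ε, hε, hball⟩ := Metric.eventually_nhds_iff_ball.mp hev
    have hmin : 0 < min ε t₀ := lt_min hε ht₀
    have hdint : IntegrableOn (fun s => p₂ s - p₁ s) (Ioi 0) := hp₂_integ.sub hp₁_integ
    have hpos : 0 < ∫ s in Ioi (0:ℝ), (p₂ s - p₁ s) := by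
      rw [setIntegral_pos_iff_support_of_nonneg_ae ?_ hdint]
      · refine lt_of_lt_of_le ?_ (measure_mono (?_ :
          Ioo (t₀ - min ε t₀) t₀ ⊆ Function.support (fun s => p₂ s - p₁ s) ∩ Ioi 0))
        · rw [Real.volume_Ioo]
          simp only [ENNReal.ofReal_pos]; linarith
        · rintro x ⟨hx1, hx2⟩
          have hx0 : 0 < x := by
            have := min_le_right ε t₀; linarith
          have hxb : x ∈ Metric.ball t₀ ε := by
            rw [Metric.mem_ball, Real.dist_eq, abs_of_neg (by linarith : x - t₀ < 0)]
            have := min_le_left ε t₀; linarith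
          exact ⟨ne_of_gt (hball x hxb), hx0⟩
      · filter_upwards [ae_restrict_mem measurableSet_Ioi] with s hs
        exact sub_nonneg.mpr (hp_le s hs)
    have : (∫ s in Ioi (0:ℝ), (p₂ s - p₁ s)) = 1 - ∫ τ in Ioi (0:ℝ), p₁ τ := by
      rw [integral_sub hp₂_integ hp₁_integ, hp₂_int]
    linarith [hpos.trans_le this.le]
  -- constants
  have hc_pos : 0 < G (ξ - β + β₀) := by
    have h := hG_mono (mem_Ici.mpr le_rfl)
      (mem_Ici.mpr (show (0:ℝ) ≤ ξ - β + β₀ by linarith))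
      (show (0:ℝ) < ξ - β + β₀ by linarith)
    rw [hG_zero] at h; exact h
  have hc_le : G (ξ - β + β₀) ≤ ξ - β := by
    have h := hGmono (mem_Ici.mpr (by linarith : (0:ℝ) ≤ ξ - β + β₀))
      (mem_Ici.mpr hξ_pos.le) (show ξ - β + β₀ ≤ ξ by linarith)
    rw [hGξ] at h; exact h
  have hGβ₀_pos : 0 < G β₀ := by
    have h := hG_mono (mem_Ici.mpr le_rfl) (mem_Ici.mpr hβ₀_pos.le) hβ₀_pos
    rw [hG_zero] at h; exact h
  have hGβ₀_lt : G β₀ < ξ - β := by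
    have h := hG_mono (mem_Ici.mpr hβ₀_pos.le) (mem_Ici.mpr hξ_pos.le) hβ₀_lt_ξ
    rw [hGξ] at h; exact h
  set r := ∫ τ in Ioi (0:ℝ), p₁ τ with hrdef
  set K' := G (G (ξ - β + β₀) * r + β₀) with hK'def
  have harg_nonneg : (0:ℝ) ≤ G (ξ - β + β₀) * r + β₀ := by positivity
  have hK'_lt : K' < ξ - β := by
    have h1 : G (ξ - β + β₀) * r + β₀ < ξ := by nlinarith
    have h := hG_mono (mem_Ici.mpr harg_nonneg) (mem_Ici.mpr hξ_pos.le) h1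
    rw [hGξ] at h; exact h
  have hGβ₀_le_K' : G β₀ ≤ K' := by
    refine hGmono (mem_Ici.mpr hβ₀_pos.le) (mem_Ici.mpr harg_nonneg) ?_
    nlinarith
  have hK'_pos : 0 < K' := hGβ₀_pos.trans_le hGβ₀_le_K'
  -- bounds on g
  have hg_lb : ∀ s, G β₀ ≤ g s := by
    intro s; rw [hg]
    refine hGmono (mem_Ici.mpr hβ₀_pos.le)
      (mem_Ici.mpr (show (0:ℝ) ≤ G (ξ - β + β₀) * F₁ s + β₀ by
        nlinarith [hF₁_nonneg s, hc_pos]))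
      (show β₀ ≤ G (ξ - β + β₀) * F₁ s + β₀ by nlinarith [hF₁_nonneg s, hc_pos])
  have hg_ub : ∀ s, g s ≤ K' := by
    intro s; rw [hg, hK'def]
    refine hGmono
      (mem_Ici.mpr (show (0:ℝ) ≤ G (ξ - β + β₀) * F₁ s + β₀ by
        nlinarith [hF₁_nonneg s, hc_pos]))
      (mem_Ici.mpr harg_nonneg)
      (show G (ξ - β + β₀) * F₁ s + β₀ ≤ G (ξ - β + β₀) * r + β₀ by
        nlinarith [hF₁_le_r s, hc_pos])
  have hg_pos : ∀ s, 0 < g s := fun s => hGβ₀_pos.trans_le (hg_lb s)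
  -- continuity of primitives
  have hprim : ∀ (f : ℝ → ℝ), IntegrableOn f (Ioi 0) → ∀ t ∈ Ioi (0:ℝ),
      ContinuousAt (fun u => ∫ s in Ioc (0:ℝ) u, f s) t := by
    intro f hf t ht
    have hIcc : IntegrableOn f (Icc 0 (t+1)) := by
      rw [integrableOn_Icc_iff_integrableOn_Ioc]
      exact hf.mono_set Ioc_subset_Ioi_self
    exact (intervalIntegral.continuousOn_primitive hIcc).continuousAt
      (Icc_mem_nhds ht (lt_add_one t))
  have hprim0 : ∀ (f : ℝ → ℝ), IntegrableOn f (Ioi 0) →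
      Tendsto (fun u => ∫ s in Ioc (0:ℝ) u, f s) (nhdsWithin 0 (Ioi 0)) (nhds 0) := by
    intro f hf
    have hIcc : IntegrableOn f (Icc 0 1) := by
      rw [integrableOn_Icc_iff_integrableOn_Ioc]
      exact hf.mono_set Ioc_subset_Ioi_self
    have h := (intervalIntegral.continuousOn_primitive hIcc) 0 (left_mem_Icc.mpr zero_le_one)
    have h0 : (∫ s in Ioc (0:ℝ) 0, f s) = 0 := by simp
    rw [ContinuousWithinAt, h0] at h
    refine h.mono_left ?_
    calc nhdsWithin (0:ℝ) (Ioi 0)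
        = nhdsWithin 0 (Ioi 0 ∩ Iic 1) := nhdsWithin_restrict' _ (Iic_mem_nhds one_pos)
      _ ≤ nhdsWithin 0 (Icc 0 1) :=
          nhdsWithin_mono _ (fun x hx => ⟨hx.1.le, hx.2⟩)
  have hF₁_contAt : ∀ t ∈ Ioi (0:ℝ), ContinuousAt F₁ t := by
    intro t ht
    have := hprim p₁ hp₁_integ t ht
    exact this.congr (by filter_upwards with u using (hF₁ u).symm)
  have hF₂_contAt : ∀ t ∈ Ioi (0:ℝ), ContinuousAt F₂ t := by
    intro t ht
    have := hprim p₂ hp₂_integ t ht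
    exact this.congr (by filter_upwards with u using (hF₂ u).symm)
  -- continuity of g and of the integrand φ = p₁ * g
  have hG_at : ∀ u : ℝ, 0 < u → ContinuousAt G u := fun u hu =>
    hG_cont.continuousAt (by rw [mem_nhds_iff]; exact ⟨Ioi 0, Ioi_subset_Ici_self, isOpen_Ioi, hu⟩)
  have hg_contAt : ∀ t ∈ Ioi (0:ℝ), ContinuousAt g t := by
    intro t ht
    have hinner : ContinuousAt (fun s => G (ξ - β + β₀) * F₁ s + β₀) t :=
      ((continuousAt_const.mul (hF₁_contAt t ht)).add continuousAt_const)
    have hval : 0 < G (ξ - β + β₀) * F₁ t + β₀ := by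
      nlinarith [hF₁_nonneg t, hc_pos]
    have h2 : ContinuousAt (fun s => G (G (ξ - β + β₀) * F₁ s + β₀)) t :=
      ContinuousAt.comp (hG_at _ hval) hinner
    exact h2.congr (by filter_upwards with u using (hg u).symm)
  have hφ_cont : ContinuousOn (fun s => p₁ s * g s) (Ioi 0) := by
    intro t ht
    exact ((hp₁_cont.continuousAt (isOpen_Ioi.mem_nhds ht)).mul
      (hg_contAt t ht)).continuousWithinAt
  have hφ_integ : IntegrableOn (fun s => p₁ s * g s) (Ioi 0) := by
    refine MeasureTheory.Integrable.mono (hp₁_integ.const_mul K')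
      (hφ_cont.aestronglyMeasurable measurableSet_Ioi) ?_
    filter_upwards [ae_restrict_mem measurableSet_Ioi] with s hs
    rw [Real.norm_eq_abs, Real.norm_eq_abs,
      abs_of_nonneg (mul_nonneg (hp₁_pos s hs).le (hg_pos s).le),
      abs_of_nonneg (mul_nonneg hK'_pos.le (hp₁_pos s hs).le)]
    nlinarith [hg_ub s, hp₁_pos s hs]
  have hφ_Ioc : ∀ t : ℝ, IntegrableOn (fun s => p₁ s * g s) (Ioc 0 t) :=
    fun t => hφ_integ.mono_set Ioc_subset_Ioi_self
  have hφ_ae : ∀ (S : Set ℝ), MeasurableSet S → S ⊆ Ioi 0 →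
      0 ≤ᵐ[volume.restrict S] fun s => p₁ s * g s := by
    intro S hS hsub
    filter_upwards [ae_restrict_mem hS] with s hs
    exact mul_nonneg (hp₁_pos s (hsub hs)).le (hg_pos s).le
  -- positivity of set integrals
  have hpos_int : ∀ (f : ℝ → ℝ), (∀ s ∈ Ioi (0:ℝ), 0 < f s) → IntegrableOn f (Ioi 0) →
      ∀ t : ℝ, 0 < t → 0 < ∫ s in Ioc (0:ℝ) t, f s := by
    intro f hfp hfi t ht
    rw [setIntegral_pos_iff_support_of_nonneg_ae ?ha (hfi.mono_set Ioc_subset_Ioi_self)]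
    case ha =>
      filter_upwards [ae_restrict_mem measurableSet_Ioc] with s hs
      exact (hfp s hs.1).le
    refine lt_of_lt_of_le ?_ (measure_mono (?_ : Ioc 0 t ⊆ _))
    · rw [Real.volume_Ioc]; simp only [ENNReal.ofReal_pos]; linarith
    · intro x hx; exact ⟨ne_of_gt (hfp x hx.1), hx⟩
  have hF₂_pos : ∀ t : ℝ, 0 < t → 0 < F₂ t := by
    intro t ht; rw [hF₂]; exact hpos_int p₂ hp₂_pos hp₂_integ t ht
  have hF₁_pos : ∀ t : ℝ, 0 < t → 0 < F₁ t := by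
    intro t ht; rw [hF₁]; exact hpos_int p₁ hp₁_pos hp₁_integ t ht
  have hN_pos : ∀ t : ℝ, 0 < t → 0 < N t := by
    intro t ht; rw [hN]
    exact hpos_int _ (fun s hs => mul_pos (hp₁_pos s hs) (hg_pos s)) hφ_integ t ht
  -- bounds on N
  have hN_le : ∀ t : ℝ, N t ≤ K' * F₁ t := by
    intro t; rw [hN, hF₁, ← integral_const_mul]
    refine setIntegral_mono_on (hφ_Ioc t) ((hp₁_Ioc t).const_mul K') measurableSet_Ioc ?_
    intro x hx
    nlinarith [hg_ub x, hp₁_pos x hx.1]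
  have hN_ge : ∀ t : ℝ, G β₀ * F₁ t ≤ N t := by
    intro t; rw [hN, hF₁, ← integral_const_mul]
    refine setIntegral_mono_on ((hp₁_Ioc t).const_mul (G β₀)) (hφ_Ioc t) measurableSet_Ioc ?_
    intro x hx
    nlinarith [hg_lb x, hp₁_pos x hx.1]
  have hN_mono : Monotone N := by
    intro a b hab
    rw [hN, hN]
    exact setIntegral_mono_set (hφ_Ioc b)
      (hφ_ae _ measurableSet_Ioc Ioc_subset_Ioi_self)
      ((Ioc_subset_Ioc_right hab).eventuallyLE)
  -- L bounds
  have hL_pos : ∀ t ∈ Ioi (0:ℝ), 0 < L t := by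
    intro t ht
    rw [hL' t]
    exact div_pos (hN_pos t ht) (mul_pos hKpos (hF₂_pos t ht))
  have hL_ub : ∀ t ∈ Ioi (0:ℝ), L t ≤ K' / (ξ - β) := by
    intro t ht
    rw [hL' t]
    rw [div_le_div_iff₀ (mul_pos hKpos (hF₂_pos t ht)) hKpos]
    have h1 : N t ≤ K' * F₂ t := (hN_le t).trans
      (mul_le_mul_of_nonneg_left (hF₁_le_F₂ t) hK'_pos.le)
    calc N t * (ξ - β) ≤ (K' * F₂ t) * (ξ - β) := mul_le_mul_of_nonneg_right h1 hKpos.le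
      _ = K' * ((ξ - β) * F₂ t) := by ring
  have hK'K_lt : K' / (ξ - β) < 1 := (div_lt_one hKpos).mpr hK'_lt
  have hL_lt_one : ∀ t ∈ Ioi (0:ℝ), L t < 1 :=
    fun t ht => lt_of_le_of_lt (hL_ub t ht) hK'K_lt
  -- continuity of L
  have hL_cont : ContinuousOn L (Ioi 0) := by
    have h : ContinuousOn (fun t => N t / ((ξ - β) * F₂ t)) (Ioi 0) := by
      intro t ht
      have hNat : ContinuousAt N t :=
        (hprim _ hφ_integ t ht).congr (by filter_upwards with u using (hN u).symm)
      exact (hNat.div ((continuousAt_const.mul (hF₂_contAt t ht)))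
        (by exact ne_of_gt (mul_pos hKpos (hF₂_pos t ht)))).continuousWithinAt
    exact h.congr (fun t _ => hL' t)
  -- limits at infinity
  have hmono_sets : Monotone (fun t : ℝ => Ioc (0:ℝ) t) := fun a b hab => Ioc_subset_Ioc_right hab
  have hUnion : (⋃ t : ℝ, Ioc (0:ℝ) t) = Ioi 0 := by
    ext x
    simp only [mem_iUnion, mem_Ioc, mem_Ioi]
    exact ⟨fun ⟨t, h, _⟩ => h, fun h => ⟨x, h, le_rfl⟩⟩
  have htend : ∀ (f : ℝ → ℝ), IntegrableOn f (Ioi 0) →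
      Tendsto (fun t => ∫ s in Ioc (0:ℝ) t, f s) atTop (nhds (∫ s in Ioi (0:ℝ), f s)) := by
    intro f hf
    have := tendsto_setIntegral_of_monotone (fun t : ℝ => measurableSet_Ioc) hmono_sets
      (by rw [hUnion]; exact hf)
    rwa [hUnion] at this
  have hN_tend : Tendsto N atTop (nhds (∫ s in Ioi (0:ℝ), p₁ s * g s)) :=
    (htend _ hφ_integ).congr (fun t => (hN t).symm)
  have hF₂_tend : Tendsto F₂ atTop (nhds 1) := by
    have := (htend _ hp₂_integ).congr (fun t => (hF₂ t).symm)
    rwa [hp₂_int] at this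
  set Ninf := ∫ s in Ioi (0:ℝ), p₁ s * g s with hNinfdef
  have hNinf_pos : 0 < Ninf := by
    refine lt_of_lt_of_le (hN_pos 1 one_pos) ?_
    rw [hN]
    exact setIntegral_mono_set hφ_integ (hφ_ae _ measurableSet_Ioi (fun _ h => h))
      (Ioc_subset_Ioi_self.eventuallyLE)
  have hNinf_lt : Ninf < ξ - β := by
    have h1 : Ninf ≤ K' * r := by
      rw [hNinfdef, hrdef, ← integral_const_mul]
      refine setIntegral_mono_on hφ_integ (hp₁_integ.const_mul K') measurableSet_Ioi ?_
      intro x hx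
      nlinarith [hg_ub x, hp₁_pos x hx]
    nlinarith [hr_lt, hK'_pos, hr_nonneg]
  have hA_tendsto : Tendsto L atTop (nhds (Ninf / ((ξ - β) * 1))) := by
    refine Tendsto.congr (fun t => (hL' t).symm) ?_
    exact hN_tend.div (tendsto_const_nhds.mul hF₂_tend) (by nlinarith)
  have hA_mem : Ninf / ((ξ - β) * 1) ∈ Ioo (0:ℝ) 1 := by
    constructor
    · exact div_pos hNinf_pos (by nlinarith)
    · rw [mul_one, div_lt_one hKpos]; exact hNinf_lt
  -- limit at 0⁺
  have hF₁_to0 : Tendsto F₁ (nhdsWithin 0 (Ioi 0)) (nhds 0) :=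
    (hprim0 p₁ hp₁_integ).congr (fun u => (hF₁ u).symm)
  have hg_to : Tendsto g (nhdsWithin 0 (Ioi 0)) (nhds (G β₀)) := by
    have hinner : Tendsto (fun s => G (ξ - β + β₀) * F₁ s + β₀) (nhdsWithin 0 (Ioi 0))
        (nhds β₀) := by
      have h0 : Tendsto (fun s => G (ξ - β + β₀) * F₁ s) (nhdsWithin 0 (Ioi 0))
          (nhds (G (ξ - β + β₀) * 0)) := tendsto_const_nhds.mul hF₁_to0
      rw [mul_zero] at h0
      simpa using h0.add (tendsto_const_nhds (x := β₀))
    have := ((hG_at β₀ hβ₀_pos).tendsto.comp hinner)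
    exact this.congr (fun u => (hg u).symm)
  have hh_to : Tendsto (fun s => p₁ s / p₂ s * g s) (nhdsWithin 0 (Ioi 0))
      (nhds (ratLim * G β₀)) := hrat_lim.mul hg_to
  have hNF : Tendsto (fun t => N t / F₂ t) (nhdsWithin 0 (Ioi 0)) (nhds (ratLim * G β₀)) := by
    rw [Metric.tendsto_nhdsWithin_nhds]
    intro ε hε
    obtain ⟨δ, hδ, hδ'⟩ := Metric.tendsto_nhdsWithin_nhds.mp hh_to (ε/2) (by linarith)
    refine ⟨δ, hδ, ?_⟩
    intro t ht htδ
    have ht' : 0 < t := ht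
    have hbound : |N t - (ratLim * G β₀) * F₂ t| ≤ (ε/2) * F₂ t := by
      have heq : N t - (ratLim * G β₀) * F₂ t
          = ∫ s in Ioc (0:ℝ) t, (p₁ s * g s - (ratLim * G β₀) * p₂ s) := by
        rw [integral_sub (hφ_Ioc t) ((hp₂_Ioc t).const_mul _), integral_const_mul,
          hN, hF₂]
      rw [heq]
      have h1 : |∫ s in Ioc (0:ℝ) t, (p₁ s * g s - (ratLim * G β₀) * p₂ s)|
          ≤ ∫ s in Ioc (0:ℝ) t, |p₁ s * g s - (ratLim * G β₀) * p₂ s| := by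
        simpa [Real.norm_eq_abs] using
          norm_integral_le_integral_norm (μ := volume.restrict (Ioc (0:ℝ) t))
            (f := fun s => p₁ s * g s - (ratLim * G β₀) * p₂ s)
      refine h1.trans ?_
      have h2 : (∫ s in Ioc (0:ℝ) t, |p₁ s * g s - (ratLim * G β₀) * p₂ s|)
          ≤ ∫ s in Ioc (0:ℝ) t, (ε/2) * p₂ s := by
        refine setIntegral_mono_on ((hφ_Ioc t).sub ((hp₂_Ioc t).const_mul _)).abs
          ((hp₂_Ioc t).const_mul _) measurableSet_Ioc ?_
        intro s hs
        have hs0 : 0 < s := hs.1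
        have hp₂s : 0 < p₂ s := hp₂_pos s hs0
        have hsδ : dist s 0 < δ := by
          rw [Real.dist_eq, sub_zero, abs_of_pos hs0]
          have : dist t 0 < δ := htδ
          rw [Real.dist_eq, sub_zero, abs_of_pos ht'] at this
          linarith [hs.2]
        have hd := hδ' hs0 hsδ
        rw [Real.dist_eq] at hd
        have hkey : p₁ s * g s - (ratLim * G β₀) * p₂ s
            = (p₁ s / p₂ s * g s - ratLim * G β₀) * p₂ s := by
          field_simp
        rw [hkey, abs_mul, abs_of_pos hp₂s]
        exact mul_le_mul_of_nonneg_right hd.le hp₂s.le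
      refine h2.trans ?_
      rw [integral_const_mul, hF₂]
    have hF₂t := hF₂_pos t ht'
    rw [Real.dist_eq]
    have heq2 : N t / F₂ t - ratLim * G β₀ = (N t - (ratLim * G β₀) * F₂ t) / F₂ t := by
      field_simp
    rw [heq2, abs_div, abs_of_pos hF₂t, div_lt_iff₀ hF₂t]
    nlinarith [hF₂t]
  have hL_tend0 : Tendsto L (nhdsWithin 0 (Ioi 0)) (nhds (G β₀ / (ξ - β) * ratLim)) := by
    have h : Tendsto (fun t => (N t / F₂ t) / (ξ - β)) (nhdsWithin 0 (Ioi 0))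
        (nhds ((ratLim * G β₀) / (ξ - β))) := hNF.div_const _
    have heq : G β₀ / (ξ - β) * ratLim = (ratLim * G β₀) / (ξ - β) := by ring
    rw [heq]
    refine Tendsto.congr (fun t => ?_) h
    rw [hL' t, div_div, mul_comm (F₂ t) (ξ - β)]
  have hratLim_le : ratLim ≤ 1 := by
    refine le_of_tendsto hrat_lim ?_
    filter_upwards [self_mem_nhdsWithin] with s hs
    exact div_le_one_of_le₀ (hp_le s hs) (hp₂_pos s hs).le
  have htarg_pos : 0 < G β₀ / (ξ - β) * ratLim :=
    mul_pos (div_pos hGβ₀_pos hKpos) hrat_pos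
  have htarg_lt : G β₀ / (ξ - β) * ratLim < 1 := by
    have h1 : G β₀ / (ξ - β) < 1 := (div_lt_one hKpos).mpr hGβ₀_lt
    nlinarith [div_pos hGβ₀_pos hKpos]
  -- lower bound σ₁
  have hσ : ∃ σ₁ ∈ Ioo (0:ℝ) 1, ∀ t ∈ Ioi (0:ℝ), σ₁ ≤ L t := by
    set c₁ := G β₀ / (ξ - β) * ratLim with hc₁def
    have hev : ∀ᶠ t in nhdsWithin (0:ℝ) (Ioi 0), c₁ / 2 < L t :=
      hL_tend0.eventually (eventually_gt_nhds (by linarith))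
    obtain ⟨u, hu, husub⟩ := mem_nhdsGT_iff_exists_Ioc_subset.mp hev
    have hu0 : (0:ℝ) < u := hu
    have hmid_pos : 0 < G β₀ * F₁ u / (ξ - β) :=
      div_pos (mul_pos hGβ₀_pos (hF₁_pos u hu0)) hKpos
    refine ⟨min (min (c₁/2) (G β₀ * F₁ u / (ξ - β))) (1/2), ⟨?_, ?_⟩, ?_⟩
    · exact lt_min (lt_min (by linarith) hmid_pos) (by norm_num)
    · exact lt_of_le_of_lt (min_le_right _ _) (by norm_num)
    · intro t ht
      rcases le_or_gt t u with hcase | hcase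
      · have : c₁ / 2 < L t := husub ⟨ht, hcase⟩
        exact le_trans (le_trans (min_le_left _ _) (min_le_left _ _)) this.le
      · refine le_trans (le_trans (min_le_left _ _) (min_le_right _ _)) ?_
        rw [hL' t]
        have h1 : G β₀ * F₁ u ≤ N t := le_trans
          (by nlinarith [hF₁_mono hcase.le, hGβ₀_pos]) (hN_ge t)
        have h2 : (ξ - β) * F₂ t ≤ ξ - β := by nlinarith [hF₂_le_one t]
        exact div_le_div₀ (hN_pos t ht).le h1
          (mul_pos hKpos (hF₂_pos t ht)) h2
  exact ⟨hL_cont, fun t ht => ⟨hL_pos t ht, hL_lt_one t ht⟩,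
    ⟨_, hA_mem, hA_tendsto⟩, ⟨hL_tend0, htarg_pos, htarg_lt⟩, hσ⟩
end

section
/- Iterated concave homeomorphism inequality (equations (3.28)–(3.29), from inequality (3.16) of [khach]). Let φ : [0,1] → [0,1] be a homeomorphism with φ(0) = 0, φ(1) = 1, and φ concave. Let σ* ∈ (0,1) and ε ∈ (0,1), and set k := (1 − φ(εσ*)) / (1 − εσ*). Then for every m ∈ ℕ, the m-fold iterate φ∘φ∘⋯∘φ (m times) evaluated at σ* satisfies 1 > φ^{(m)}(σ*) ≥ k^m σ* + 1 − k^m. -/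
/-!
A concave `φ` on `[0,1]` lies above each of its chords. The chord over `[0,1]` is the diagonal,
so `x ≤ φ x`, and with strict monotonicity `φ` maps `[εσ*, 1)` into itself. On that interval
the chord over `[εσ*, 1]`, of slope `k`, gives `1 - φ x ≤ k (1 - x)`: the distance to the fixed
point `1` contracts by at least the factor `k` per step, whence `1 - φ^[m] σ* ≤ k^m (1 - σ*)`.
-/

open Set Function

theorem ConcaveOn.apply_right_sub_slope_mul_le {f : ℝ → ℝ} {a b x : ℝ}
    (hf : ConcaveOn ℝ (Icc a b) f) (hx : x ∈ Icc a b) :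
    f b - (f b - f a) / (b - a) * (b - x) ≤ f x := by
  obtain ⟨hax, hxb⟩ := hx
  obtain rfl | hab := (hax.trans hxb).eq_or_lt
  · obtain rfl : x = a := le_antisymm hxb hax
    simp
  have hba : 0 < b - a := sub_pos.2 hab
  have h := hf.2 (left_mem_Icc.2 hab.le) (right_mem_Icc.2 hab.le)
    (div_nonneg (sub_nonneg.2 hxb) hba.le) (div_nonneg (sub_nonneg.2 hax) hba.le)
    (by field_simp; ring)
  have hpt : (b - x) / (b - a) * a + (x - a) / (b - a) * b = x := by field_simp; ring
  simp only [smul_eq_mul, hpt] at h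
  calc f b - (f b - f a) / (b - a) * (b - x)
      = (b - x) / (b - a) * f a + (x - a) / (b - a) * f b := by field_simp; ring
    _ ≤ f x := h

theorem le_apply_of_concaveOn_unitInterval {φ : ℝ → ℝ} (hφ : ConcaveOn ℝ (Icc 0 1) φ)
    (hφ0 : φ 0 = 0) (hφ1 : φ 1 = 1) {x : ℝ} (hx : x ∈ Icc 0 1) : x ≤ φ x := by
  simpa [hφ0, hφ1] using hφ.apply_right_sub_slope_mul_le hx

theorem mapsTo_Ico_one_of_concaveOn_unitInterval {φ : ℝ → ℝ} (hφ : ConcaveOn ℝ (Icc 0 1) φ)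
    (hφ_mono : StrictMonoOn φ (Icc 0 1)) (hφ0 : φ 0 = 0) (hφ1 : φ 1 = 1) {a : ℝ} (ha : 0 ≤ a) :
    MapsTo φ (Ico a 1) (Ico a 1) := by
  rintro x ⟨hax, hx1⟩
  have hx : x ∈ Icc (0 : ℝ) 1 := ⟨ha.trans hax, hx1.le⟩
  refine ⟨hax.trans (le_apply_of_concaveOn_unitInterval hφ hφ0 hφ1 hx), ?_⟩
  simpa [hφ1] using hφ_mono hx (right_mem_Icc.2 zero_le_one) hx1

theorem iterate_le_pow_mul_of_le_mul {α : Type*} {g : α → α} {s : Set α} {d : α → ℝ} {k : ℝ}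
    (hs : MapsTo g s s) (hk : 0 ≤ k) (hd : ∀ x ∈ s, d (g x) ≤ k * d x) {x : α} (hx : x ∈ s) :
    ∀ m : ℕ, d (g^[m] x) ≤ k ^ m * d x
  | 0 => by simp
  | m + 1 => by
    rw [iterate_succ_apply', pow_succ', mul_assoc]
    exact (hd _ (hs.iterate m hx)).trans
      (mul_le_mul_of_nonneg_left (iterate_le_pow_mul_of_le_mul hs hk hd hx m) hk)

theorem iterated_concave_homeomorphism_inequality_general
    (φ : ℝ → ℝ) (σs ε k : ℝ)
    (hφ0 : φ 0 = 0) (hφ1 : φ 1 = 1)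
    (hφ_mono : StrictMonoOn φ (Icc 0 1))
    (hφ_conc : ConcaveOn ℝ (Icc 0 1) φ)
    (hσs : σs ∈ Ioo (0:ℝ) 1) (hε : ε ∈ Ioo (0:ℝ) 1)
    (hk : k = (1 - φ (ε * σs)) / (1 - ε * σs)) :
    ∀ m : ℕ, φ^[m] σs < 1 ∧ k ^ m * σs + 1 - k ^ m ≤ φ^[m] σs := by
  set a := ε * σs
  have haσ : a < σs := mul_lt_of_lt_one_left hσs.1 hε.2
  have ha : a ∈ Ico (0 : ℝ) 1 := ⟨(mul_pos hε.1 hσs.1).le, haσ.trans hσs.2⟩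
  have hmaps := mapsTo_Ico_one_of_concaveOn_unitInterval hφ_conc hφ_mono hφ0 hφ1 ha.1
  have hk0 : 0 ≤ k :=
    hk ▸ div_nonneg (sub_nonneg.2 (hmaps ⟨le_rfl, ha.2⟩).2.le) (sub_nonneg.2 ha.2.le)
  have hchord : ∀ x ∈ Ico a 1, 1 - φ x ≤ k * (1 - x) := fun x hx => by
    have := (hφ_conc.subset (Icc_subset_Icc_left ha.1) (convex_Icc a 1))
      |>.apply_right_sub_slope_mul_le (Ico_subset_Icc_self hx)
    rw [hφ1, ← hk] at this
    linarith
  have hσ : σs ∈ Ico a 1 := ⟨haσ.le, hσs.2⟩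
  intro m
  have hgap := iterate_le_pow_mul_of_le_mul hmaps hk0 hchord hσ m
  exact ⟨(hmaps.iterate m hσ).2, by linarith⟩

/-- **Iterated concave homeomorphism inequality (eqs. (3.28)–(3.29)).**
For a concave homeomorphism `φ` of `[0,1]` fixing `0` and `1`, `σ* ∈ (0,1)`,
`ε ∈ (0,1)` and `k := (1 - φ(ε σ*))/(1 - ε σ*)`, the `m`-fold iterate of `φ`
at `σ*` satisfies `1 > φ^[m] σ* ≥ k^m σ* + 1 - k^m` for every `m`. -/
theorem iterated_concave_homeomorphism_inequality
    (φ : ℝ → ℝ) (σs ε k : ℝ)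
    (hφ_cont : ContinuousOn φ (Icc 0 1))
    (hφ0 : φ 0 = 0) (hφ1 : φ 1 = 1)
    (hφ_mono : StrictMonoOn φ (Icc 0 1))
    (hφ_conc : ConcaveOn ℝ (Icc 0 1) φ)
    (hσs : σs ∈ Ioo (0:ℝ) 1) (hε : ε ∈ Ioo (0:ℝ) 1)
    (hk : k = (1 - φ (ε * σs)) / (1 - ε * σs)) :
    ∀ m : ℕ, φ^[m] σs < 1 ∧ k ^ m * σs + 1 - k ^ m ≤ φ^[m] σs :=
  iterated_concave_homeomorphism_inequality_general φ σs ε k hφ0 hφ1 hφ_mono hφ_conc hσs hε hk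
end

section
/- Geometric decay of successive differences (inequality (3.30)). Let {v_m}_{m≥0} be a sequence of measurable functions on X×(0,∞) with 0 ≤ v_m(x,t) ≤ M a.e. for all m, satisfying φ^{(m)}(σ*) v_{m+1}(x,t) ≤ v_{m+2}(x,t) ≤ v_{m+1}(x,t) for all m ∈ ℕ, a.e. x and a.e. t, where φ^{(m)} is the m-fold iterate of φ. Then for every ε ∈ (0,1), setting k := (1 − φ(εσ*))/(1 − εσ*), one has 0 ≤ v_{m+1}(x,t) − v_{m+2}(x,t) ≤ M (1 − σ*) k^m for all m ∈ ℕ, a.e. x ∈ X and a.e. t > 0; consequently 0 ≤ v_{m+1}(x,t) − v_{m+p+2}(x,t) ≤ M(1−σ*) k^m/(1−k) for all m, p ∈ ℕ whenever k < 1, so {v_m} converges uniformly a.e. -/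
/-!
Concavity with `φ 0 = 0`, `φ 1 = 1` makes `φ s ≥ s`, so the iterates `φ^[m] σ*` stay in
`[ε σ*, 1]`, and there `φ` lies above its chord from `ε σ*` to `1`: `1 - φ s ≤ k (1 - s)`.
Hence `1 - φ^[m] σ* ≤ k^m (1 - σ*)`, and the lower half of the sandwich gives
`v (m+1) - v (m+2) ≤ (1 - φ^[m] σ*) v (m+1) ≤ M (1 - σ*) k^m` at every good point.
For `k < 1`, at each good point `m ↦ v (m+1)` decreases with geometrically small steps, so it
converges to its infimum with the geometric-series tail bound, uniformly in the point.
-/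

open MeasureTheory Set Filter Function Topology

theorem ConcaveOn.sub_mul_add_sub_mul_le {f : ℝ → ℝ} {D : Set ℝ} (hf : ConcaveOn ℝ D f)
    {x y z : ℝ} (hx : x ∈ D) (hz : z ∈ D) (hxy : x ≤ y) (hyz : y ≤ z) :
    (z - y) * f x + (y - x) * f z ≤ (z - x) * f y := by
  rcases hxy.eq_or_lt with rfl | hxy
  · linarith
  rcases hyz.eq_or_lt with rfl | hyz
  · linarith
  have := hf.neg.secant_mono_aux1 hx hz hxy hyz
  simp only [Pi.neg_apply] at this
  linarith

section NormalizedConcave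

variable {φ : ℝ → ℝ} (hφ_conc : ConcaveOn ℝ (Icc 0 1) φ) (hφ1 : φ 1 = 1)
include hφ_conc hφ1

theorem le_apply_of_concaveOn_Icc (hφ0 : φ 0 = 0) {s : ℝ} (hs : s ∈ Icc (0 : ℝ) 1) :
    s ≤ φ s := by
  simpa [hφ0, hφ1] using
    hφ_conc.sub_mul_add_sub_mul_le (left_mem_Icc.2 zero_le_one) (right_mem_Icc.2 zero_le_one)
      hs.1 hs.2

theorem mapsTo_Icc_of_concaveOn (hφ0 : φ 0 = 0) (hφ_mono : MonotoneOn φ (Icc 0 1))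
    {a : ℝ} (ha : 0 ≤ a) : MapsTo φ (Icc a 1) (Icc a 1) := fun s hs =>
  have hs' : s ∈ Icc (0 : ℝ) 1 := ⟨ha.trans hs.1, hs.2⟩
  ⟨hs.1.trans (le_apply_of_concaveOn_Icc hφ_conc hφ1 hφ0 hs'),
    hφ1 ▸ hφ_mono hs' (right_mem_Icc.2 zero_le_one) hs.2⟩

theorem one_sub_le_of_concaveOn {a : ℝ} (ha : a ∈ Ico (0 : ℝ) 1) {s : ℝ}
    (hs : s ∈ Icc a 1) :
    1 - φ s ≤ (1 - φ a) / (1 - a) * (1 - s) := by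
  have h1a : 0 < 1 - a := sub_pos.2 ha.2
  have := hφ_conc.sub_mul_add_sub_mul_le ⟨ha.1, ha.2.le⟩ (right_mem_Icc.2 zero_le_one)
    hs.1 hs.2
  rw [hφ1] at this
  rw [div_mul_eq_mul_div, le_div_iff₀ h1a]
  linear_combination this

end NormalizedConcave

theorem sub_iterate_le_pow_mul {f : ℝ → ℝ} {S : Set ℝ} {b k : ℝ} (hS : MapsTo f S S)
    (hk : 0 ≤ k) (hf : ∀ s ∈ S, b - f s ≤ k * (b - s)) (n : ℕ) :
    ∀ s ∈ S, b - f^[n] s ≤ k ^ n * (b - s) := by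
  induction n with
  | zero => simp
  | succ n ih =>
    intro s hs
    calc b - f^[n + 1] s = b - f^[n] (f s) := by rw [iterate_succ_apply]
      _ ≤ k ^ n * (b - f s) := ih _ (hS hs)
      _ ≤ k ^ n * (k * (b - s)) := mul_le_mul_of_nonneg_left (hf s hs) (pow_nonneg hk n)
      _ = k ^ (n + 1) * (b - s) := by ring

section Antitone

variable {u : ℕ → ℝ} {C r : ℝ} (hu : Antitone u) (hbdd : BddBelow (range u)) (hr : r < 1)
  (hdiff : ∀ n, u n - u (n + 1) ≤ C * r ^ n)
include hu hbdd hr hdiff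

theorem Antitone.sub_ciInf_le_geometric (n : ℕ) : u n - ⨅ i, u i ≤ C * r ^ n / (1 - r) := by
  have hstep : ∀ n, dist (u n) (u (n + 1)) ≤ C * r ^ n := fun n => by
    rw [Real.dist_eq, abs_of_nonneg (sub_nonneg.2 (hu n.le_succ))]
    exact hdiff n
  have := dist_le_of_le_geometric_of_tendsto r C hr hstep (tendsto_atTop_ciInf hu hbdd) n
  rwa [Real.dist_eq, abs_of_nonneg (sub_nonneg.2 (ciInf_le hbdd n))] at this

theorem Antitone.sub_le_geometric (m p : ℕ) : u m - u (m + p) ≤ C * r ^ m / (1 - r) :=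
  (sub_le_sub_left (ciInf_le hbdd _) _).trans (hu.sub_ciInf_le_geometric hbdd hr hdiff m)

end Antitone

theorem sandwiched_seq_bounds {u c : ℕ → ℝ} {M σ k : ℝ}
    (hu : ∀ n, 0 ≤ u n ∧ u n ≤ M)
    (hsand : ∀ m, c m * u (m + 1) ≤ u (m + 2) ∧ u (m + 2) ≤ u (m + 1))
    (hc : ∀ m, c m ≤ 1 ∧ 1 - c m ≤ k ^ m * (1 - σ)) :
    (∀ m, 0 ≤ u (m + 1) - u (m + 2) ∧ u (m + 1) - u (m + 2) ≤ M * (1 - σ) * k ^ m) ∧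
    (k < 1 →
      (∀ m p : ℕ, 0 ≤ u (m + 1) - u (m + p + 2) ∧
        u (m + 1) - u (m + p + 2) ≤ M * (1 - σ) / (1 - k) * k ^ m) ∧
      ∀ m, |u (m + 1) - ⨅ n, u (n + 1)| ≤ M * (1 - σ) / (1 - k) * k ^ m) := by
  have hstep : ∀ m, u (m + 1) - u (m + 2) ≤ M * (1 - σ) * k ^ m := fun m =>
    calc u (m + 1) - u (m + 2) ≤ (1 - c m) * u (m + 1) := by linarith [(hsand m).1]
      _ ≤ (1 - c m) * M := mul_le_mul_of_nonneg_left (hu _).2 (sub_nonneg.2 (hc m).1)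
      _ ≤ k ^ m * (1 - σ) * M := mul_le_mul_of_nonneg_right (hc m).2 ((hu 0).1.trans (hu 0).2)
      _ = M * (1 - σ) * k ^ m := by ring
  refine ⟨fun m => ⟨sub_nonneg.2 (hsand m).2, hstep m⟩, fun hk1 => ?_⟩
  have hanti : Antitone fun n => u (n + 1) := antitone_nat_of_succ_le fun n => (hsand n).2
  have hbdd : BddBelow (range fun n => u (n + 1)) :=
    ⟨0, by rintro _ ⟨n, rfl⟩; exact (hu _).1⟩
  simp only [div_mul_eq_mul_div]
  refine ⟨fun m p => ⟨sub_nonneg.2 (hanti (m.le_add_right (p + 1))),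
    hanti.sub_le_geometric hbdd hk1 hstep m (p + 1)⟩, fun m => ?_⟩
  rw [abs_of_nonneg (sub_nonneg.2 (ciInf_le hbdd m))]
  exact hanti.sub_ciInf_le_geometric hbdd hk1 hstep m

theorem geometric_decay_successive_differences_general
    {X : Type*} [MeasurableSpace X] (μ : Measure X)
    (φ : ℝ → ℝ) (σs M : ℝ)
    (hφ0 : φ 0 = 0) (hφ1 : φ 1 = 1)
    (hφ_mono : StrictMonoOn φ (Icc 0 1))
    (hφ_conc : ConcaveOn ℝ (Icc 0 1) φ)
    (hσs : σs ∈ Ioo (0:ℝ) 1)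
    (v : ℕ → X → ℝ → ℝ)
    (hv_bdd : ∀ m, ∀ᵐ q ∂(μ.prod (volume.restrict (Ioi (0:ℝ)))),
      0 ≤ v m q.1 q.2 ∧ v m q.1 q.2 ≤ M)
    (hv_sandwich : ∀ m : ℕ, ∀ᵐ q ∂(μ.prod (volume.restrict (Ioi (0:ℝ)))),
      φ^[m] σs * v (m + 1) q.1 q.2 ≤ v (m + 2) q.1 q.2 ∧
      v (m + 2) q.1 q.2 ≤ v (m + 1) q.1 q.2) :
    ∀ ε ∈ Ioo (0:ℝ) 1, ∀ k : ℝ, k = (1 - φ (ε * σs)) / (1 - ε * σs) →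
      (∀ m : ℕ, ∀ᵐ q ∂(μ.prod (volume.restrict (Ioi (0:ℝ)))),
        0 ≤ v (m + 1) q.1 q.2 - v (m + 2) q.1 q.2 ∧
        v (m + 1) q.1 q.2 - v (m + 2) q.1 q.2 ≤ M * (1 - σs) * k ^ m) ∧
      (k < 1 →
        (∀ m p : ℕ, ∀ᵐ q ∂(μ.prod (volume.restrict (Ioi (0:ℝ)))),
          0 ≤ v (m + 1) q.1 q.2 - v (m + p + 2) q.1 q.2 ∧
          v (m + 1) q.1 q.2 - v (m + p + 2) q.1 q.2 ≤
            M * (1 - σs) / (1 - k) * k ^ m) ∧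
        ∃ w : X → ℝ → ℝ, ∀ δ > (0:ℝ), ∃ N : ℕ, ∀ m ≥ N,
          ∀ᵐ q ∂(μ.prod (volume.restrict (Ioi (0:ℝ)))),
            |v m q.1 q.2 - w q.1 q.2| ≤ δ) := by
  rintro ε ⟨hε0, hε1⟩ k hk
  obtain ⟨hσ0, hσ1⟩ := hσs
  have ha : ε * σs ∈ Ico (0 : ℝ) 1 := ⟨by positivity, by nlinarith⟩
  have hσ_mem : σs ∈ Icc (ε * σs) 1 := ⟨by nlinarith, hσ1.le⟩
  have hmaps := mapsTo_Icc_of_concaveOn hφ_conc hφ1 hφ0 hφ_mono.monotoneOn ha.1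
  have hk0 : 0 ≤ k :=
    hk ▸ div_nonneg (sub_nonneg.2 (hmaps ⟨le_rfl, ha.2.le⟩).2) (sub_nonneg.2 ha.2.le)
  have hiter : ∀ m, φ^[m] σs ≤ 1 ∧ 1 - φ^[m] σs ≤ k ^ m * (1 - σs) := fun m =>
    ⟨(hmaps.iterate m hσ_mem).2, sub_iterate_le_pow_mul hmaps hk0
      (fun _ => hk ▸ one_sub_le_of_concaveOn hφ_conc hφ1 ha) m σs hσ_mem⟩
  have hpt := (ae_all_iff.2 fun m => (hv_bdd m).and (hv_sandwich m)).mono fun q hq =>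
    sandwiched_seq_bounds (fun n => (hq n).1) (fun n => (hq n).2) hiter
  refine ⟨fun m => hpt.mono fun q hq => hq.1 m, fun hk1 =>
    ⟨fun m p => hpt.mono fun q hq => (hq.2 hk1).1 m p, fun x t => ⨅ n, v (n + 1) x t, ?_⟩⟩
  intro δ hδ
  obtain ⟨N, hN⟩ := eventually_atTop.1 <|
    ((tendsto_pow_atTop_nhds_zero_of_lt_one hk0 hk1).const_mul
      (M * (1 - σs) / (1 - k))).eventually (gt_mem_nhds (by rwa [mul_zero]))
  refine ⟨N + 1, fun m hm => ?_⟩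
  obtain ⟨n, rfl⟩ : ∃ n, m = n + 1 := ⟨m - 1, by omega⟩
  exact hpt.mono fun q hq => ((hq.2 hk1).2 n).trans (hN n (by omega)).le

/-- **Geometric decay of successive differences (inequality (3.30)).**
If `0 ≤ v m ≤ M` a.e. and `φ^[m] σ* · v (m+1) ≤ v (m+2) ≤ v (m+1)` a.e. for
all `m`, then for every `ε ∈ (0,1)`, with `k := (1 - φ(ε σ*))/(1 - ε σ*)`,
`0 ≤ v (m+1) - v (m+2) ≤ M (1-σ*) k^m` a.e.; consequently, if `k < 1`,
`0 ≤ v (m+1) - v (m+p+2) ≤ M (1-σ*) k^m / (1-k)` a.e. for all `m, p`, and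
the sequence converges uniformly a.e. -/
theorem geometric_decay_successive_differences
    {X : Type*} [MeasurableSpace X] (μ : Measure X) [SigmaFinite μ]
    (φ : ℝ → ℝ) (σs M : ℝ)
    (hφ_cont : ContinuousOn φ (Icc 0 1))
    (hφ0 : φ 0 = 0) (hφ1 : φ 1 = 1)
    (hφ_mono : StrictMonoOn φ (Icc 0 1))
    (hφ_conc : ConcaveOn ℝ (Icc 0 1) φ)
    (hσs : σs ∈ Ioo (0:ℝ) 1) (hM : 0 < M)
    (v : ℕ → X → ℝ → ℝ)
    (hv_meas : ∀ m, Measurable fun q : X × ℝ => v m q.1 q.2)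
    (hv_bdd : ∀ m, ∀ᵐ q ∂(μ.prod (volume.restrict (Ioi (0:ℝ)))),
      0 ≤ v m q.1 q.2 ∧ v m q.1 q.2 ≤ M)
    (hv_sandwich : ∀ m : ℕ, ∀ᵐ q ∂(μ.prod (volume.restrict (Ioi (0:ℝ)))),
      φ^[m] σs * v (m + 1) q.1 q.2 ≤ v (m + 2) q.1 q.2 ∧
      v (m + 2) q.1 q.2 ≤ v (m + 1) q.1 q.2) :
    ∀ ε ∈ Ioo (0:ℝ) 1, ∀ k : ℝ, k = (1 - φ (ε * σs)) / (1 - ε * σs) →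
      (∀ m : ℕ, ∀ᵐ q ∂(μ.prod (volume.restrict (Ioi (0:ℝ)))),
        0 ≤ v (m + 1) q.1 q.2 - v (m + 2) q.1 q.2 ∧
        v (m + 1) q.1 q.2 - v (m + 2) q.1 q.2 ≤ M * (1 - σs) * k ^ m) ∧
      (k < 1 →
        (∀ m p : ℕ, ∀ᵐ q ∂(μ.prod (volume.restrict (Ioi (0:ℝ)))),
          0 ≤ v (m + 1) q.1 q.2 - v (m + p + 2) q.1 q.2 ∧
          v (m + 1) q.1 q.2 - v (m + p + 2) q.1 q.2 ≤
            M * (1 - σs) / (1 - k) * k ^ m) ∧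
        ∃ w : X → ℝ → ℝ, ∀ δ > (0:ℝ), ∃ N : ℕ, ∀ m ≥ N,
          ∀ᵐ q ∂(μ.prod (volume.restrict (Ioi (0:ℝ)))),
            |v m q.1 q.2 - w q.1 q.2| ≤ δ) :=
  geometric_decay_successive_differences_general μ φ σs M hφ0 hφ1 hφ_mono hφ_conc hσs v hv_bdd
    hv_sandwich
end

section
/- First-iterate upper bound and positivity of σ♯ in the substochastic case (inequalities (3.38) and (3.46)). Define v₀(x,t) := η − β and v₁(x,t) := ∫₀ᵗ ∫_X K(x,y;t−s) h(y,s) G(v₀(y,s) + g(y,s)) dμ(y) ds. Then v₁(x,t) ≤ (η − β)(1 − e^{−tλ₋}) for a.e. x ∈ X and a.e. t > 0. Moreover, the constant σ♯ := min{ α G(β₀) / ((η−β)λ₋), (α/((η−β)λ₋)) · G((α/λ₊) G(η−β)(1 − e^{−T₀λ₊})) } satisfies σ♯ ∈ (0,1). -/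
open MeasureTheory Set Filter

/-!
Since `g ≤ β` and `h ≤ γ` almost everywhere and `G` is monotone, the integrand of `v₁` is at most
`γ G(η)` times the kernel, whose mass at time `τ > 0` is at most `e^{-τλ₋}`; integrating over
`s ∈ (0, t]` gives `v₁ ≤ γ G(η) (1 - e^{-tλ₋}) / λ₋ = (η - β)(1 - e^{-tλ₋})`.
Both terms of `σ♯` are positive because `G` is strictly increasing with `G 0 = 0`, and the first
one is below `1` since `α G(β₀) ≤ γ G(β₀) < γ G(η) = (η - β) λ₋`, using `α ≤ h ≤ γ` and
`β₀ ≤ g ≤ β < η` on a set of positive measure.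
-/

open Real in
theorem integral_exp_neg_sub_mul {c : ℝ} (hc : c ≠ 0) (t : ℝ) :
    ∫ s in (0:ℝ)..t, exp (-((t - s) * c)) = (1 - exp (-(t * c))) / c := by
  have hderiv : ∀ s ∈ uIcc 0 t,
      HasDerivAt (fun s => exp (-((t - s) * c)) / c) (exp (-((t - s) * c))) s := by
    intro s _
    have hlin : ∀ x, -((t - x) * c) = x * c - t * c := fun x => by ring
    have h := ((hasDerivAt_mul_const (x := s) c).sub_const (t * c)).exp.div_const c
    rw [mul_div_cancel_right₀ _ hc] at h
    simp only [hlin]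
    exact h
  rw [intervalIntegral.integral_eq_sub_of_hasDerivAt hderiv
    (Continuous.intervalIntegrable (by fun_prop) _ _)]
  simp only [sub_self, zero_mul, neg_zero, exp_zero, sub_zero]
  ring

theorem ae_restrict_Iio_sub_of_ae_restrict_Ioi {P : ℝ → Prop}
    (h : ∀ᵐ τ ∂volume.restrict (Ioi 0), P τ) (t : ℝ) :
    ∀ᵐ s ∂volume.restrict (Iio t), P (t - s) := by
  rw [ae_restrict_iff' measurableSet_Ioi] at h
  rw [ae_restrict_iff' measurableSet_Iio]
  filter_upwards [(Measure.measurePreserving_sub_left volume t).quasiMeasurePreserving.ae h]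
    with s hs hst
  exact hs (sub_pos.2 (mem_Iio.1 hst))

section

variable {X T : Type*} [MeasurableSpace X] [MeasurableSpace T] {μ : Measure X}

theorem ae_le_toReal_eLpNorm_top {f : X → ℝ} (hf : MemLp f ⊤ μ) :
    ∀ᵐ x ∂μ, f x ≤ (eLpNorm f ⊤ μ).toReal := by
  filter_upwards [ae_le_lpNorm_exponent_top hf] with x hx
  rw [toReal_eLpNorm hf.1]
  exact (le_abs_self _).trans hx

-- Unlike `Measure.ae_ae_comm`, this needs no measurability of `p`: `Prod.swap` is measure
-- preserving and `Measure.ae_ae_of_ae_prod` holds for arbitrary predicates.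
theorem ae_ae_swap_of_ae_prod [SFinite μ] {ν : Measure T} [SFinite ν]
    {p : X × T → Prop} (h : ∀ᵐ z ∂μ.prod ν, p z) : ∀ᵐ y ∂ν, ∀ᵐ x ∂μ, p (x, y) :=
  Measure.ae_ae_of_ae_prod (Measure.measurePreserving_swap.quasiMeasurePreserving.ae h)

theorem le_of_ae_prod_le_of_le_on {ν : Measure T} [SFinite ν] {f : X → T → ℝ} {a c : ℝ}
    {s : Set T} (hμ : μ ≠ 0) (hs : MeasurableSet s) (hνs : ν s ≠ 0)
    (hle : ∀ᵐ q ∂μ.prod ν, f q.1 q.2 ≤ c) (hge : ∀ x, ∀ t ∈ s, a ≤ f x t) : a ≤ c := by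
  have : (ae μ).NeBot := ae_neBot.2 hμ
  obtain ⟨x, hx⟩ := (Measure.ae_ae_of_ae_prod hle).exists
  have : (ae (ν.restrict s)).NeBot := ae_neBot.2 (by rwa [Ne, Measure.restrict_eq_zero])
  obtain ⟨t, hts, ht⟩ := ((ae_restrict_mem hs).and (ae_restrict_of_ae hx)).exists
  exact (hge x t hts).trans ht

theorem integral_mul_le_integral_mul_of_ae_le {f w : X → ℝ} {M : ℝ} (hf : Integrable f μ)
    (hf0 : 0 ≤ᵐ[μ] f) (hw0 : 0 ≤ᵐ[μ] w) (hw : ∀ᵐ y ∂μ, w y ≤ M) :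
    ∫ y, f y * w y ∂μ ≤ (∫ y, f y ∂μ) * M := by
  rw [← integral_mul_const]
  refine integral_mono_of_nonneg ?_ (hf.mul_const M) ?_
  · filter_upwards [hf0, hw0] with y hfy hwy using mul_nonneg hfy hwy
  · filter_upwards [hf0, hw] with y hfy hwy using mul_le_mul_of_nonneg_left hwy hfy

theorem setIntegral_Ioc_integral_kernel_mul_le {k F : X → ℝ → ℝ} {lam M t : ℝ}
    (hlam : lam ≠ 0) (ht : 0 ≤ t) (hM : 0 ≤ M) (hk0 : ∀ y τ, 0 ≤ k y τ)
    (hF0 : ∀ y s, 0 ≤ F y s)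
    (hk : ∀ᵐ τ ∂volume.restrict (Ioi 0),
      Integrable (k · τ) μ ∧ ∫ y, k y τ ∂μ ≤ Real.exp (-(τ * lam)))
    (hF : ∀ᵐ s ∂volume.restrict (Ioi 0), ∀ᵐ y ∂μ, F y s ≤ M) :
    ∫ s in Ioc 0 t, ∫ y, k y (t - s) * F y s ∂μ ≤ M * (1 - Real.exp (-(t * lam))) / lam := by
  have hinner : ∀ᵐ s ∂volume.restrict (Ioo 0 t),
      ∫ y, k y (t - s) * F y s ∂μ ≤ M * Real.exp (-((t - s) * lam)) := by
    filter_upwards [ae_restrict_of_ae_restrict_of_subset Ioo_subset_Iio_self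
        (ae_restrict_Iio_sub_of_ae_restrict_Ioi hk t),
      ae_restrict_of_ae_restrict_of_subset Ioo_subset_Ioi_self hF] with s ⟨hint, hmass⟩ hFs
    calc ∫ y, k y (t - s) * F y s ∂μ
        ≤ (∫ y, k y (t - s) ∂μ) * M := integral_mul_le_integral_mul_of_ae_le hint
          (ae_of_all _ fun y => hk0 y _) (ae_of_all _ fun y => hF0 y s) hFs
      _ ≤ Real.exp (-((t - s) * lam)) * M := by gcongr
      _ = M * Real.exp (-((t - s) * lam)) := mul_comm _ _
  calc ∫ s in Ioc 0 t, ∫ y, k y (t - s) * F y s ∂μ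
      = ∫ s in Ioo 0 t, ∫ y, k y (t - s) * F y s ∂μ := integral_Ioc_eq_integral_Ioo
    _ ≤ ∫ s in Ioo 0 t, M * Real.exp (-((t - s) * lam)) :=
        integral_mono_of_nonneg
          (ae_of_all _ fun s => integral_nonneg fun y => mul_nonneg (hk0 y _) (hF0 y s))
          ((Continuous.integrableOn_Icc (by fun_prop)).mono_set Ioo_subset_Icc_self) hinner
    _ = M * ∫ s in (0:ℝ)..t, Real.exp (-((t - s) * lam)) := by
        rw [integral_const_mul, intervalIntegral.integral_of_le ht, integral_Ioc_eq_integral_Ioo]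
    _ = M * (1 - Real.exp (-(t * lam))) / lam := by
        rw [integral_exp_neg_sub_mul hlam, mul_div_assoc]

end

theorem sigma_sharp_mem_Ioo {G : ℝ → ℝ} {lamm lamp β γ α η T₀ β₀ : ℝ}
    (hlam : 0 < lamm) (hlam_le : lamm ≤ lamp) (hT₀ : 0 < T₀) (hβ₀_pos : 0 < β₀)
    (hβ₀η : β₀ < η) (hβη : β < η) (hα_pos : 0 < α) (hαγ : α ≤ γ)
    (hG_zero : G 0 = 0) (hG_mono : StrictMonoOn G (Ici 0))
    (hη_eq : γ * G η = (η - β) * lamm) :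
    min (α * G β₀ / ((η - β) * lamm))
      (α / ((η - β) * lamm) * G (α / lamp * G (η - β) * (1 - Real.exp (-(T₀ * lamp)))))
      ∈ Ioo 0 1 := by
  have hG_pos : ∀ u, 0 < u → 0 < G u := fun u hu => by
    simpa [hG_zero] using hG_mono self_mem_Ici hu.le hu
  have hden : 0 < (η - β) * lamm := mul_pos (sub_pos.2 hβη) hlam
  have hdecay : 0 < 1 - Real.exp (-(T₀ * lamp)) := by
    rw [sub_pos, Real.exp_lt_one_iff, neg_lt_zero]
    exact mul_pos hT₀ (hlam.trans_le hlam_le)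
  refine ⟨lt_min (div_pos (mul_pos hα_pos (hG_pos β₀ hβ₀_pos)) hden)
    (mul_pos (div_pos hα_pos hden) (hG_pos _ (mul_pos (mul_pos
      (div_pos hα_pos (hlam.trans_le hlam_le)) (hG_pos _ (sub_pos.2 hβη))) hdecay))),
    (min_le_left _ _).trans_lt ?_⟩
  rw [div_lt_one hden, ← hη_eq]
  calc α * G β₀ ≤ γ * G β₀ := mul_le_mul_of_nonneg_right hαγ (hG_pos β₀ hβ₀_pos).le
    _ < γ * G η := mul_lt_mul_of_pos_left
        (hG_mono (mem_Ici.2 hβ₀_pos.le) (mem_Ici.2 (hβ₀_pos.trans hβ₀η).le) hβ₀η)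
        (hα_pos.trans_le hαγ)

theorem first_iterate_bound_and_sigma_sharp_substochastic_general
    {X : Type*} [MeasurableSpace X] (μ : Measure X) [SigmaFinite μ]
    (K : X → X → ℝ → ℝ) (g h : X → ℝ → ℝ) (G : ℝ → ℝ)
    (lamm lamp β γ α η T₀ β₀ σsharp : ℝ)
    (hlam : 0 < lamm) (hlam_le : lamm ≤ lamp)
    (hK_nonneg : ∀ x y t, 0 ≤ K x y t)
    (hK_sub : ∀ᵐ x ∂μ, ∀ᵐ t ∂(volume.restrict (Ioi (0:ℝ))),
      Real.exp (-(t * lamp)) ≤ (∫ y, K x y t ∂μ) ∧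
      (∫ y, K x y t ∂μ) ≤ Real.exp (-(t * lamm)))
    (hg_nonneg : ∀ x t, 0 ≤ g x t)
    (hg_bdd : MemLp (fun q : X × ℝ => g q.1 q.2) ⊤
      (μ.prod (volume.restrict (Ioi (0:ℝ)))))
    (hβ : β = (eLpNorm (fun q : X × ℝ => g q.1 q.2) ⊤
      (μ.prod (volume.restrict (Ioi (0:ℝ))))).toReal)
    (hT₀ : 0 < T₀) (hβ₀_pos : 0 < β₀)
    (hβ₀ : ∀ x t, 0 < t → t < T₀ → β₀ ≤ g x t)
    (hh_nonneg : ∀ x t, 0 ≤ h x t)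
    (hα_pos : 0 < α) (hα : ∀ x t, 0 < t → α ≤ h x t)
    (hh_bdd : MemLp (fun q : X × ℝ => h q.1 q.2) ⊤
      (μ.prod (volume.restrict (Ioi (0:ℝ)))))
    (hγ : γ = (eLpNorm (fun q : X × ℝ => h q.1 q.2) ⊤
      (μ.prod (volume.restrict (Ioi (0:ℝ))))).toReal)
    (hG_zero : G 0 = 0)
    (hG_nonneg : ∀ u, 0 ≤ u → 0 ≤ G u)
    (hG_mono : StrictMonoOn G (Ici 0))
    (hη_pos : 0 < η) (hη_eq : γ * G η = (η - β) * lamm)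
    (v₁ : X → ℝ → ℝ)
    (hv₁ : ∀ x t, v₁ x t =
      ∫ s in Ioc (0:ℝ) t, ∫ y, K x y (t - s) * (h y s * G (η - β + g y s)) ∂μ)
    (hσsharp : σsharp = min (α * G β₀ / ((η - β) * lamm))
      (α / ((η - β) * lamm) *
        G (α / lamp * G (η - β) * (1 - Real.exp (-(T₀ * lamp)))))) :
    (∀ᵐ q ∂(μ.prod (volume.restrict (Ioi (0:ℝ)))),
      v₁ q.1 q.2 ≤ (η - β) * (1 - Real.exp (-(q.2 * lamm)))) ∧
    σsharp ∈ Ioo (0:ℝ) 1 := by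
  set ν : Measure ℝ := volume.restrict (Ioi 0)
  have hg_le : ∀ᵐ q ∂μ.prod ν, g q.1 q.2 ≤ β := hβ ▸ ae_le_toReal_eLpNorm_top hg_bdd
  have hh_le : ∀ᵐ q ∂μ.prod ν, h q.1 q.2 ≤ γ := hγ ▸ ae_le_toReal_eLpNorm_top hh_bdd
  have hμ : μ ≠ 0 := by
    rintro rfl
    simp only [Measure.zero_prod, eLpNorm_measure_zero, ENNReal.toReal_zero] at hβ hγ
    subst hβ hγ
    nlinarith
  have hαγ : α ≤ γ := le_of_ae_prod_le_of_le_on hμ measurableSet_Ioi (by simp [ν]) hh_le hα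
  have hβ₀β : β₀ ≤ β := le_of_ae_prod_le_of_le_on hμ measurableSet_Ioo
    (by simp [ν, inter_eq_left.2 Ioo_subset_Ioi_self, hT₀]) hg_le fun x t ht => hβ₀ x t ht.1 ht.2
  have hγ_pos : 0 < γ := hα_pos.trans_le hαγ
  have hGη : 0 < G η := by simpa [hG_zero] using hG_mono self_mem_Ici hη_pos.le hη_pos
  have hβη : β < η := by nlinarith [mul_pos hγ_pos hGη]
  refine ⟨?_, hσsharp ▸ sigma_sharp_mem_Ioo hlam hlam_le hT₀ hβ₀_pos (hβ₀β.trans_lt hβη) hβη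
    hα_pos hαγ hG_zero hG_mono hη_eq⟩
  have hshift : ∀ y s, 0 ≤ η - β + g y s := fun y s => by linarith [hg_nonneg y s]
  have hF : ∀ᵐ s ∂ν, ∀ᵐ y ∂μ, h y s * G (η - β + g y s) ≤ γ * G η := by
    filter_upwards [ae_ae_swap_of_ae_prod (hg_le.and hh_le)] with s hs
    filter_upwards [hs] with y ⟨hgy, hhy⟩
    exact mul_le_mul hhy (hG_mono.monotoneOn (hshift y s) hη_pos.le (by linarith))
      (hG_nonneg _ (hshift y s)) hγ_pos.le
  filter_upwards [Measure.quasiMeasurePreserving_fst.ae hK_sub,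
    Measure.quasiMeasurePreserving_snd.ae (ae_restrict_mem measurableSet_Ioi)] with q hK ht
  -- The lower bound `e^{-τλ₊} ≤ ∫ K` excludes the junk value `0` of a non-integrable integral.
  have hk : ∀ᵐ τ ∂ν, Integrable (K q.1 · τ) μ ∧ ∫ y, K q.1 y τ ∂μ ≤ Real.exp (-(τ * lamm)) :=
    hK.mono fun τ hτ => ⟨.of_integral_ne_zero ((Real.exp_pos _).trans_le hτ.1).ne', hτ.2⟩
  calc v₁ q.1 q.2 ≤ γ * G η * (1 - Real.exp (-(q.2 * lamm))) / lamm :=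
        hv₁ q.1 q.2 ▸ setIntegral_Ioc_integral_kernel_mul_le hlam.ne' (le_of_lt ht)
          (mul_nonneg hγ_pos.le hGη.le) (hK_nonneg q.1)
          (fun y s => mul_nonneg (hh_nonneg y s) (hG_nonneg _ (hshift y s))) hk hF
    _ = (η - β) * (1 - Real.exp (-(q.2 * lamm))) := by
        rw [hη_eq]; field_simp

/-- **First-iterate upper bound and positivity of `σ♯`, substochastic case
(inequalities (3.38) and (3.46)).** With
`v₁(x,t) = ∫₀ᵗ ∫_X K(x,y;t-s) h(y,s) G(η - β + g(y,s)) dμ ds`, one has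
`v₁(x,t) ≤ (η - β)(1 - e^{-tλ₋})` a.e.; moreover the constant
`σ♯ = min{α G(β₀)/((η-β)λ₋), (α/((η-β)λ₋)) G((α/λ₊) G(η-β)(1 - e^{-T₀λ₊}))}`
lies in `(0,1)`. -/
theorem first_iterate_bound_and_sigma_sharp_substochastic
    {X : Type*} [MeasurableSpace X] (μ : Measure X) [SigmaFinite μ]
    (K : X → X → ℝ → ℝ) (g h : X → ℝ → ℝ) (G : ℝ → ℝ)
    (lamm lamp β γ α η T₀ β₀ σsharp : ℝ)
    (hlam : 0 < lamm) (hlam_le : lamm ≤ lamp)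
    (hK_meas : Measurable fun q : X × X × ℝ => K q.1 q.2.1 q.2.2)
    (hK_nonneg : ∀ x y t, 0 ≤ K x y t)
    (hK_sub : ∀ᵐ x ∂μ, ∀ᵐ t ∂(volume.restrict (Ioi (0:ℝ))),
      Real.exp (-(t * lamp)) ≤ (∫ y, K x y t ∂μ) ∧
      (∫ y, K x y t ∂μ) ≤ Real.exp (-(t * lamm)))
    (hg_meas : Measurable fun q : X × ℝ => g q.1 q.2)
    (hg_nonneg : ∀ x t, 0 ≤ g x t)
    (hg_bdd : MemLp (fun q : X × ℝ => g q.1 q.2) ⊤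
      (μ.prod (volume.restrict (Ioi (0:ℝ)))))
    (hβ : β = (eLpNorm (fun q : X × ℝ => g q.1 q.2) ⊤
      (μ.prod (volume.restrict (Ioi (0:ℝ))))).toReal)
    (hT₀ : 0 < T₀) (hβ₀_pos : 0 < β₀)
    (hβ₀ : ∀ x t, 0 < t → t < T₀ → β₀ ≤ g x t)
    (hh_meas : Measurable fun q : X × ℝ => h q.1 q.2)
    (hh_nonneg : ∀ x t, 0 ≤ h x t)
    (hα_pos : 0 < α) (hα : ∀ x t, 0 < t → α ≤ h x t)
    (hh_bdd : MemLp (fun q : X × ℝ => h q.1 q.2) ⊤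
      (μ.prod (volume.restrict (Ioi (0:ℝ)))))
    (hγ : γ = (eLpNorm (fun q : X × ℝ => h q.1 q.2) ⊤
      (μ.prod (volume.restrict (Ioi (0:ℝ))))).toReal)
    (hG_cont : ContinuousOn G (Ici 0))
    (hG_zero : G 0 = 0)
    (hG_nonneg : ∀ u, 0 ≤ u → 0 ≤ G u)
    (hG_mono : StrictMonoOn G (Ici 0))
    (hG_conc : ConcaveOn ℝ (Ici 0) G)
    (hη_pos : 0 < η) (hη_eq : γ * G η = (η - β) * lamm)
    (v₁ : X → ℝ → ℝ)
    (hv₁ : ∀ x t, v₁ x t =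
      ∫ s in Ioc (0:ℝ) t, ∫ y, K x y (t - s) * (h y s * G (η - β + g y s)) ∂μ)
    (hσsharp : σsharp = min (α * G β₀ / ((η - β) * lamm))
      (α / ((η - β) * lamm) *
        G (α / lamp * G (η - β) * (1 - Real.exp (-(T₀ * lamp)))))) :
    (∀ᵐ q ∂(μ.prod (volume.restrict (Ioi (0:ℝ)))),
      v₁ q.1 q.2 ≤ (η - β) * (1 - Real.exp (-(q.2 * lamm)))) ∧
    σsharp ∈ Ioo (0:ℝ) 1 :=
  first_iterate_bound_and_sigma_sharp_substochastic_general μ K g h G lamm lamp β γ α η T₀ β₀ σsharp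
    hlam hlam_le hK_nonneg hK_sub hg_nonneg hg_bdd hβ hT₀ hβ₀_pos hβ₀ hh_nonneg hα_pos hα hh_bdd hγ
    hG_zero hG_nonneg hG_mono hη_pos hη_eq v₁ hv₁ hσsharp
end
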